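/- arXiv:1308.3112 — 2 statements merged into one kernel-verified Lean document; each statement's English description precedes it below -/
import Mathlib

section
/- Let r ≥ 0 and n ≥ r be integers, and let g and h be elements of {−1,1}^{2ⁿ} satisfying |⟨g,h⟩| ≤ 2ⁿ/C(n,r). Let X be drawn uniformly at random from {−1,1}^{2ⁿ}, and write Y_g = ⟨X,g⟩ and Y_h = ⟨X,h⟩. Then Pr[ Y_g ≥ √(2^{n+1}·C(n,r)·log 2) and Y_h ≥ √(2^{n+1}·C(n,r)·log 2) ] ≤ 4 / 4^{C(n,r)}. -/
open MeasureTheory ProbabilityTheory Filter Real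

noncomputable section

/-- Boolean functions on `𝔽₂ⁿ`. -/
abbrev BF (n : ℕ) := (Fin n → ZMod 2) → ZMod 2

/-- Hamming distance between Boolean functions. -/
def hdist {n : ℕ} (f g : BF n) : ℕ := Nat.card {x : Fin n → ZMod 2 | f x ≠ g x}

/-- Weight of a Boolean function. -/
def wt {n : ℕ} (g : BF n) : ℕ := Nat.card {x : Fin n → ZMod 2 | g x ≠ 0}

/-- The Reed–Muller code `RM(r,n)`: Boolean functions of degree at most `r`. -/
def RM (r n : ℕ) : Set (BF n) :=
  {g | ∃ p : MvPolynomial (Fin n) (ZMod 2),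
    p.totalDegree ≤ r ∧ ∀ x, MvPolynomial.eval x p = g x}

/-- The `r`-th order nonlinearity of a Boolean function. -/
def nonlin (r : ℕ) {n : ℕ} (f : BF n) : ℕ := sInf (hdist f '' RM r n)

/-- Extend `x ∈ 𝔽₂ⁿ` to a finitely supported sequence `(x₁,…,xₙ,0,0,…)`. -/
def extend {n : ℕ} (x : Fin n → ZMod 2) : ℕ →₀ ZMod 2 :=
  ∑ i : Fin n, Finsupp.single (i : ℕ) (x i)

/-- The sign `±1` attached to a Boolean coordinate, modelling uniform `{-1,1}`. -/
def sgn (b : Bool) : ℝ := if b then 1 else -1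


theorem stmt5 (r n : ℕ) (hrn : r ≤ n) (g h : Fin (2^n) → ℝ)
    (hg : ∀ j, g j = 1 ∨ g j = -1) (hh : ∀ j, h j = 1 ∨ h j = -1)
    (hip : |∑ j, g j * h j| ≤ 2^n / (n.choose r : ℝ)) :
    (Nat.card {x : Fin (2^n) → Bool |
        Real.sqrt (2^(n+1) * (n.choose r) * Real.log 2) ≤ ∑ j, sgn (x j) * g j ∧
        Real.sqrt (2^(n+1) * (n.choose r) * Real.log 2) ≤ ∑ j, sgn (x j) * h j} : ℝ)
        / 2^(2^n)
      ≤ 4 / 4^(n.choose r) := by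
  classical
  have hlog2 : (0:ℝ) < Real.log 2 := Real.log_pos (by norm_num)
  set C : ℝ := (n.choose r : ℝ) with hCdef
  have hC1 : (1:ℝ) ≤ C := by
    have := Nat.choose_pos hrn
    rw [hCdef]; exact_mod_cast this
  have hC0 : (0:ℝ) < C := lt_of_lt_of_le one_pos hC1
  set t : ℝ := Real.sqrt (2^(n+1) * C * Real.log 2) with ht
  have htnn : 0 ≤ t := Real.sqrt_nonneg _
  have ht2 : t^2 = 2^(n+1) * C * Real.log 2 := Real.sq_sqrt (by positivity)
  set V : ℝ := ∑ j, (g j + h j)^2 with hVdef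
  set W : ℝ := 2^(n+1) * (C+1) / C with hW
  have hW0 : (0:ℝ) < W := by positivity
  set L : ℝ := 2*t/W with hL
  have hL0 : 0 ≤ L := by positivity
  -- V ≤ W
  have hV : V = 2^(n+1) + 2 * ∑ j, g j * h j := by
    have e : ∀ j, (g j + h j)^2 = 2 + 2*(g j * h j) := by
      intro j; rcases hg j with e1|e1 <;> rcases hh j with e2|e2 <;> rw [e1, e2] <;> ring
    rw [hVdef, Finset.sum_congr rfl fun j _ => e j, Finset.sum_add_distrib,
      Finset.sum_const, ← Finset.mul_sum]
    simp only [Finset.card_univ, Fintype.card_fin, nsmul_eq_mul]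
    push_cast
    ring
  have hVW : V ≤ W := by
    have h1 : ∑ j, g j * h j ≤ 2^n / C := le_trans (le_abs_self _) hip
    have h2 : (2:ℝ)^(n+1) + 2 * (2^n / C) = W := by
      rw [hW]; field_simp; ring
    rw [hV, ← h2]
    linarith
  -- pointwise indicator bound
  set S : (Fin (2^n) → Bool) → ℝ := fun x => ∑ j, sgn (x j) * (g j + h j) with hS
  set P : (Fin (2^n) → Bool) → Prop := fun x =>
    t ≤ ∑ j, sgn (x j) * g j ∧ t ≤ ∑ j, sgn (x j) * h j with hP
  have hpoint : ∀ x, (if P x then (1:ℝ) else 0) ≤ Real.exp (L * (S x - 2*t)) := by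
    intro x
    by_cases hx : P x
    · rw [if_pos hx]
      have hsplit : S x = (∑ j, sgn (x j) * g j) + ∑ j, sgn (x j) * h j := by
        rw [hS, ← Finset.sum_add_distrib]
        exact Finset.sum_congr rfl fun j _ => by ring
      have hs : 2*t ≤ S x := by rw [hsplit]; linarith [hx.1, hx.2]
      have : 0 ≤ L * (S x - 2*t) := mul_nonneg hL0 (by linarith)
      exact Real.one_le_exp this
    · rw [if_neg hx]
      positivity
  -- card as a sum
  have hNcard : (Nat.card {x : Fin (2^n) → Bool | P x} : ℝ)
      = ∑ x : Fin (2^n) → Bool, (if P x then (1:ℝ) else 0) := by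
    rw [Nat.card_eq_fintype_card, Fintype.card_subtype, Finset.sum_boole]
    congr 1
  -- the sum over the sum-splitting
  have hVsum : ∑ j : Fin (2^n), (L*(g j + h j))^2/2 = L^2 * V / 2 := by
    rw [hVdef, Finset.mul_sum, Finset.sum_div]
    exact Finset.sum_congr rfl fun j _ => by ring
  -- the mgf computation
  have hsum : ∑ x : Fin (2^n) → Bool, Real.exp (L * (S x - 2*t))
      ≤ 2^(2^n) * Real.exp (L^2 * W / 2 - 2*L*t) := by
    have step1 : ∀ x : Fin (2^n) → Bool, Real.exp (L * (S x - 2*t))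
        = Real.exp (-(2*L*t)) * ∏ j, Real.exp (L * (sgn (x j) * (g j + h j))) := by
      intro x
      have e1 : L * (S x - 2*t)
          = -(2*L*t) + ∑ j, L * (sgn (x j) * (g j + h j)) := by
        simp only [hS]
        rw [mul_sub, Finset.mul_sum]
        ring
      rw [e1, Real.exp_add, Real.exp_sum]
    calc ∑ x : Fin (2^n) → Bool, Real.exp (L * (S x - 2*t))
        = Real.exp (-(2*L*t)) * ∑ x : Fin (2^n) → Bool,
            ∏ j, Real.exp (L * (sgn (x j) * (g j + h j))) := by
          rw [Finset.mul_sum]; exact Finset.sum_congr rfl fun x _ => step1 x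
      _ = Real.exp (-(2*L*t)) * ∏ j : Fin (2^n),
            ∑ b : Bool, Real.exp (L * (sgn b * (g j + h j))) := by
          rw [Fintype.prod_sum]
      _ ≤ Real.exp (-(2*L*t)) * ∏ j : Fin (2^n),
            (2 * Real.exp ((L * (g j + h j))^2 / 2)) := by
          apply mul_le_mul_of_nonneg_left _ (Real.exp_nonneg _)
          apply Finset.prod_le_prod
          · intro j _; positivity
          · intro j _
            have hb : ∑ b : Bool, Real.exp (L * (sgn b * (g j + h j)))
                = Real.exp (L * (g j + h j)) + Real.exp (-(L * (g j + h j))) := by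
              rw [Fintype.sum_bool]
              have h1 : sgn true = 1 := rfl
              have h2 : sgn false = -1 := rfl
              rw [h1, h2, one_mul,
                show L * (-1 * (g j + h j)) = -(L * (g j + h j)) by ring]
            rw [hb]
            have hcosh := Real.cosh_le_exp_half_sq (L * (g j + h j))
            rw [Real.cosh_eq] at hcosh
            linarith
      _ = Real.exp (-(2*L*t)) * (2^(2^n) * Real.exp (L^2 * V / 2)) := by
          rw [Finset.prod_mul_distrib, Finset.prod_const, Finset.card_univ,
            Fintype.card_fin, ← Real.exp_sum, hVsum]
      _ ≤ 2^(2^n) * Real.exp (L^2 * W / 2 - 2*L*t) := by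
          have hre : Real.exp (-(2*L*t)) * ((2:ℝ)^(2^n) * Real.exp (L ^ 2 * V / 2))
              = 2^(2^n) * Real.exp (L ^ 2 * V / 2 + -(2*L*t)) := by
            rw [Real.exp_add]; ring
          rw [hre]
          apply mul_le_mul_of_nonneg_left _ (by positivity)
          apply Real.exp_le_exp.mpr
          have : L^2 * V ≤ L^2 * W := mul_le_mul_of_nonneg_left hVW (by positivity)
          linarith
  -- combine
  have hmain : (Nat.card {x : Fin (2^n) → Bool | P x} : ℝ) / 2^(2^n)
      ≤ Real.exp (L^2 * W / 2 - 2*L*t) := by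
    rw [div_le_iff₀ (by positivity)]
    rw [hNcard]
    calc ∑ x : Fin (2^n) → Bool, (if P x then (1:ℝ) else 0)
        ≤ ∑ x : Fin (2^n) → Bool, Real.exp (L * (S x - 2*t)) :=
          Finset.sum_le_sum fun x _ => hpoint x
      _ ≤ 2^(2^n) * Real.exp (L^2 * W / 2 - 2*L*t) := hsum
      _ = Real.exp (L^2 * W / 2 - 2*L*t) * 2^(2^n) := by ring
  -- evaluate the exponent
  have hexp : L^2 * W / 2 - 2*L*t = -(2*C^2*Real.log 2/(C+1)) := by
    have h1 : L^2 * W / 2 - 2*L*t = -(2*t^2/W) := by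
      rw [hL]; field_simp; ring
    rw [h1, ht2, hW]
    have hC1' : (0:ℝ) < C + 1 := by linarith
    field_simp
  -- final numeric bound
  have hfinal : Real.exp (-(2*C^2*Real.log 2/(C+1))) ≤ 4 / 4^(n.choose r) := by
    rw [le_div_iff₀ (by positivity)]
    have h4 : (4:ℝ)^(n.choose r) = Real.exp (C * Real.log 4) := by
      rw [hCdef, Real.exp_nat_mul, Real.exp_log (by norm_num : (0:ℝ) < 4)]
    rw [h4, ← Real.exp_add]
    have hlog4 : Real.log 4 = 2 * Real.log 2 := by
      rw [show (4:ℝ) = 2^2 by norm_num, Real.log_pow]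
      push_cast; ring
    have hC1' : (0:ℝ) < C + 1 := by linarith
    have e : -(2*C^2*Real.log 2/(C+1)) + C * (2*Real.log 2) - 2*Real.log 2
        = -(2*Real.log 2/(C+1)) := by field_simp; ring
    have hpos : 0 ≤ 2*Real.log 2/(C+1) := by positivity
    have key : -(2*C^2*Real.log 2/(C+1)) + C * Real.log 4 ≤ Real.log 4 := by
      rw [hlog4]; linarith
    calc Real.exp (-(2*C^2*Real.log 2/(C+1)) + C * Real.log 4)
        ≤ Real.exp (Real.log 4) := Real.exp_le_exp.mpr key
      _ = 4 := Real.exp_log (by norm_num)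
  calc (Nat.card {x : Fin (2^n) → Bool | P x} : ℝ) / 2^(2^n)
      ≤ Real.exp (L^2 * W / 2 - 2*L*t) := hmain
    _ = Real.exp (-(2*C^2*Real.log 2/(C+1))) := by rw [hexp]
    _ ≤ 4 / 4^(n.choose r) := hfinal
end
end

section
/- Let r ≥ 1 and n ≥ 1 be integers and let f be a uniformly distributed random Boolean function on 𝔽₂ⁿ. Then E[ 2ⁿ − 2·N_r(f) ] ≤ √( 2^{n+1} · (1 + C(n,1) + C(n,2) + ⋯ + C(n,r)) · log 2 ). -/
open MeasureTheory ProbabilityTheory Filter Real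

noncomputable section

/-!
For `t > 0`, Jensen's inequality and a union bound over the code give
`exp (t 𝔼[max_g S_g]) ≤ 𝔼[exp (t max_g S_g)] ≤ ∑_g 𝔼[exp (t S_g)]`, where
`S_g(f) = ∑ₓ (-1)^(f x + g x) = 2ⁿ - 2 d(f,g)` and the maximum over `g ∈ RM(r,n)` is
`2ⁿ - 2 N_r(f)`. For each fixed `g` the signs are independent and uniform, so
`𝔼[exp (t S_g)] = (cosh t)^(2ⁿ) ≤ exp (2ⁿ t² / 2)`, and `|RM(r,n)| ≤ 2^K` with
`K = ∑_{i ≤ r} C(n,i)` because every function of degree `≤ r` is a combination of the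
monomials `∏_{i ∈ s} xᵢ` with `|s| ≤ r`. Hence `t 𝔼[2ⁿ - 2 N_r] ≤ K log 2 + 2ⁿ t² / 2`,
and the choice `t = √(2 K log 2 / 2ⁿ)` gives the bound.
-/

open Finset

lemma ZMod.two_pow_eq_self {a : ZMod 2} {k : ℕ} (hk : k ≠ 0) : a ^ k = a := by
  fin_cases a
  · exact zero_pow hk
  · exact one_pow k

lemma card_filter_card_le_le_sum_choose {α : Type*} [Fintype α] (r : ℕ) :
    #{s : Finset α | #s ≤ r} ≤ ∑ k ∈ range (r + 1), (Fintype.card α).choose k := by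
  classical
  simp_rw [← card_univ, ← card_powersetCard]
  refine (card_le_card fun s hs ↦ mem_biUnion.2 ⟨#s, ?_⟩).trans card_biUnion_le
  simp_all

lemma MvPolynomial.card_support_le_totalDegree {σ R : Type*} [CommSemiring R]
    {p : MvPolynomial σ R} {d : σ →₀ ℕ} (hd : d ∈ p.support) : #d.support ≤ p.totalDegree :=
  calc #d.support = ∑ _i ∈ d.support, 1 := by simp
    _ ≤ d.sum fun _ e => e :=
      sum_le_sum fun _ hi => Nat.one_le_iff_ne_zero.2 (Finsupp.mem_support_iff.1 hi)
    _ ≤ p.totalDegree := le_totalDegree hd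

lemma le_sqrt_of_forall_mul_le_add {m a b : ℝ} (ha : 0 < a) (hb : 0 < b)
    (h : ∀ t > 0, t * m ≤ a + b * t ^ 2 / 2) : m ≤ √(2 * a * b) := by
  set t := √(2 * a / b)
  have ht : 0 < t := sqrt_pos.2 (by positivity)
  have htsq : t ^ 2 = 2 * a / b := sq_sqrt (by positivity)
  have hkey : t * √(2 * a * b) = 2 * a := by
    rw [← sqrt_mul (by positivity), show 2 * a / b * (2 * a * b) = (2 * a) ^ 2 by field_simp,
      sqrt_sq (by positivity)]
  refine le_of_mul_le_mul_left ?_ ht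
  calc t * m ≤ a + b * t ^ 2 / 2 := h t ht
    _ = t * √(2 * a * b) := by rw [hkey, htsq]; field_simp; ring

theorem mul_sum_div_card_le_log_card_add {Ω ι : Type*} [Fintype Ω] [Nonempty Ω] [Fintype ι]
    {X : ι → Ω → ℝ} {M : Ω → ℝ} (hM : ∀ ω, ∃ i, M ω ≤ X i ω) {t c : ℝ} (ht : 0 ≤ t)
    (hmgf : ∀ i, ∑ ω, exp (t * X i ω) ≤ Fintype.card Ω * exp c) :
    t * ((∑ ω, M ω) / Fintype.card Ω) ≤ log (Fintype.card ι) + c := by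
  set N : ℝ := (Fintype.card Ω : ℝ)
  have hN : 0 < N := Nat.cast_pos.2 Fintype.card_pos
  have hι : Nonempty ι := let ⟨i, _⟩ := hM (Classical.arbitrary Ω); ⟨i⟩
  have hjensen := convexOn_exp.map_sum_le (t := univ) (w := fun _ => N⁻¹)
    (p := fun ω => t * M ω) (fun _ _ => inv_nonneg.2 hN.le) (by simp [N])
    (fun _ _ => Set.mem_univ _)
  simp only [smul_eq_mul, ← mul_sum] at hjensen
  have hunion : ∀ ω, exp (t * M ω) ≤ ∑ i, exp (t * X i ω) := fun ω =>
    let ⟨i, hi⟩ := hM ω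
    (exp_le_exp.2 (mul_le_mul_of_nonneg_left hi ht)).trans
      (single_le_sum (f := fun i => exp (t * X i ω)) (fun _ _ => (exp_pos _).le) (mem_univ i))
  have hbound : exp (t * ((∑ ω, M ω) / N)) ≤ Fintype.card ι * exp c :=
    calc exp (t * ((∑ ω, M ω) / N))
        = exp (N⁻¹ * (t * ∑ ω, M ω)) := by ring_nf
      _ ≤ N⁻¹ * ∑ ω, exp (t * M ω) := hjensen
      _ ≤ N⁻¹ * ∑ i, ∑ ω, exp (t * X i ω) := by
        rw [sum_comm]
        gcongr with ω
        exact hunion ω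
      _ ≤ N⁻¹ * ∑ _i : ι, N * exp c := by gcongr with i; exact hmgf i
      _ = Fintype.card ι * exp c := by rw [sum_const, nsmul_eq_mul, card_univ]; field_simp
  calc t * ((∑ ω, M ω) / N) ≤ log (Fintype.card ι * exp c) :=
        (le_log_iff_exp_le (by positivity)).2 hbound
    _ = log (Fintype.card ι) + c := by rw [log_mul (by positivity) (exp_pos c).ne', log_exp]

lemma sum_exp_mul_sum_sign_eq {α : Type*} [Fintype α] [DecidableEq α] (c : α → ZMod 2) (t : ℝ) :
    ∑ f : α → ZMod 2, exp (t * ∑ x, if f x = c x then (1 : ℝ) else -1) =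
      (2 * cosh t) ^ Fintype.card α := by
  have hpoint : ∀ b : ZMod 2,
      ∑ a : ZMod 2, exp (t * if a = b then (1 : ℝ) else -1) = 2 * cosh t := by
    intro b
    rw [show (univ : Finset (ZMod 2)) = {0, 1} from rfl, sum_pair zero_ne_one, cosh_eq]
    obtain rfl | rfl : b = 0 ∨ b = 1 := by decide +revert
    all_goals simp; ring
  simp_rw [mul_sum, exp_sum]
  rw [← Fintype.prod_sum (fun x a => exp (t * if a = c x then (1 : ℝ) else -1))]
  simp only [hpoint, prod_const, card_univ]

lemma sum_exp_mul_sum_sign_le {α : Type*} [Fintype α] [DecidableEq α] (c : α → ZMod 2) (t : ℝ) :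
    ∑ f : α → ZMod 2, exp (t * ∑ x, if f x = c x then (1 : ℝ) else -1) ≤
      Fintype.card (α → ZMod 2) * exp (Fintype.card α * t ^ 2 / 2) := by
  rw [sum_exp_mul_sum_sign_eq, Fintype.card_fun, ZMod.card, mul_pow]
  push_cast
  rw [mul_div_assoc, exp_nat_mul]
  gcongr
  exact cosh_le_exp_half_sq t

lemma sub_two_mul_hdist_eq_sum {n : ℕ} (f g : BF n) :
    (2 : ℝ) ^ n - 2 * hdist f g = ∑ x, if f x = g x then (1 : ℝ) else -1 := by
  classical
  have hsign : ∀ x,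
      (if f x = g x then (1 : ℝ) else -1) = 1 - 2 * if f x ≠ g x then 1 else 0 := by
    intro x
    by_cases h : f x = g x <;> norm_num [h]
  rw [sum_congr rfl fun x _ => hsign x, sum_sub_distrib, ← mul_sum, sum_boole]
  simp [hdist, Nat.card_eq_fintype_card, Fintype.card_subtype]

def monomialFn {n : ℕ} (s : Finset (Fin n)) : BF n := fun x => ∏ i ∈ s, x i

def monomialsOfDegreeLE (r n : ℕ) : Finset (BF n) :=
  (univ.filter fun s : Finset (Fin n) => #s ≤ r).image monomialFn

lemma eval_eq_sum_monomialFn {n : ℕ} (p : MvPolynomial (Fin n) (ZMod 2)) (x : Fin n → ZMod 2) :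
    MvPolynomial.eval x p = ∑ d ∈ p.support, p.coeff d * monomialFn d.support x := by
  rw [MvPolynomial.eval_eq]
  refine sum_congr rfl fun d _ => congrArg _ (prod_congr rfl fun i hi => ?_)
  exact ZMod.two_pow_eq_self (Finsupp.mem_support_iff.1 hi)

lemma RM_subset_span_monomialsOfDegreeLE (r n : ℕ) :
    RM r n ⊆ Submodule.span (ZMod 2) (monomialsOfDegreeLE r n : Set (BF n)) := by
  rintro g ⟨p, hdeg, hp⟩
  have hg : g = ∑ d ∈ p.support, p.coeff d • monomialFn d.support := by
    funext x
    simp [← hp x, eval_eq_sum_monomialFn]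
  rw [hg]
  refine Submodule.sum_mem _ fun d hd => Submodule.smul_mem _ _ (Submodule.subset_span ?_)
  simpa [monomialsOfDegreeLE] using
    ⟨_, (MvPolynomial.card_support_le_totalDegree hd).trans hdeg, rfl⟩

lemma card_RM_le (r n : ℕ) : Nat.card (RM r n) ≤ 2 ^ ∑ k ∈ range (r + 1), n.choose k := by
  classical
  calc Nat.card (RM r n)
      ≤ Nat.card (Submodule.span (ZMod 2) (monomialsOfDegreeLE r n : Set (BF n))) :=
        Nat.card_mono (Set.toFinite _) (RM_subset_span_monomialsOfDegreeLE r n)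
    _ = 2 ^ (monomialsOfDegreeLE r n : Set (BF n)).finrank (ZMod 2) := by
        rw [Module.natCard_eq_pow_finrank (K := ZMod 2), Nat.card_zmod]; rfl
    _ ≤ 2 ^ #(monomialsOfDegreeLE r n) :=
        Nat.pow_le_pow_right two_pos (finrank_span_finset_le_card _)
    _ ≤ 2 ^ ∑ k ∈ range (r + 1), n.choose k := by
        refine Nat.pow_le_pow_right two_pos (card_image_le.trans ?_)
        simpa using card_filter_card_le_le_sum_choose (α := Fin n) r

lemma zero_mem_RM (r n : ℕ) : (0 : BF n) ∈ RM r n := ⟨0, by simp, fun x => by simp⟩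

lemma exists_mem_RM_hdist_eq_nonlin (r : ℕ) {n : ℕ} (f : BF n) :
    ∃ g ∈ RM r n, hdist f g = nonlin r f :=
  Nat.sInf_mem ⟨_, Set.mem_image_of_mem _ (zero_mem_RM r n)⟩

theorem stmt7_general (r n : ℕ) :
    (∑ g : BF n, ((2^n : ℝ) - 2 * nonlin r g)) / 2^(2^n)
      ≤ Real.sqrt (2^(n+1) * (∑ i ∈ Finset.range (r+1), (n.choose i : ℝ)) * Real.log 2) := by
  classical
  set K : ℕ := ∑ i ∈ range (r + 1), n.choose i
  have hK : (1 : ℝ) ≤ K := by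
    exact_mod_cast (Nat.choose_zero_right n).symm.trans_le
      (single_le_sum (f := n.choose) (fun _ _ => Nat.zero_le _) (by simp))
  have hlog_card : log (Fintype.card (RM r n)) ≤ K * log 2 := by
    have : Nonempty (RM r n) := ⟨⟨0, zero_mem_RM r n⟩⟩
    rw [← log_pow, Fintype.card_eq_nat_card]
    gcongr
    · exact_mod_cast Nat.card_pos
    · exact_mod_cast card_RM_le r n
  have hmax : ∀ f : BF n, ∃ g : RM r n,
      (2 : ℝ) ^ n - 2 * nonlin r f ≤ ∑ x, if f x = g.1 x then (1 : ℝ) else -1 := fun f => by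
    obtain ⟨g, hg, hdist_eq⟩ := exists_mem_RM_hdist_eq_nonlin r f
    exact ⟨⟨g, hg⟩, by rw [← hdist_eq, sub_two_mul_hdist_eq_sum]⟩
  have hopt : ∀ t > 0, t * ((∑ f : BF n, ((2 ^ n : ℝ) - 2 * nonlin r f)) / 2 ^ 2 ^ n) ≤
      K * log 2 + 2 ^ n * t ^ 2 / 2 := fun t ht => by
    have := mul_sum_div_card_le_log_card_add hmax (c := 2 ^ n * t ^ 2 / 2) ht.le
      fun g => by simpa using sum_exp_mul_sum_sign_le g.1 t
    simp only [Fintype.card_fun, ZMod.card, Fintype.card_fin, Nat.cast_pow,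
      Nat.cast_ofNat] at this
    linarith
  calc _ ≤ √(2 * (K * log 2) * 2 ^ n) :=
        le_sqrt_of_forall_mul_le_add (by positivity) (by positivity) hopt
    _ = _ := by push_cast [K]; ring_nf

theorem stmt7 (r n : ℕ) (hr : 1 ≤ r) (hn : 1 ≤ n) :
    (∑ g : BF n, ((2^n : ℝ) - 2 * nonlin r g)) / 2^(2^n)
      ≤ Real.sqrt (2^(n+1) * (∑ i ∈ Finset.range (r+1), (n.choose i : ℝ)) * Real.log 2) :=
  stmt7_general r n
end
end
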